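/- arXiv:2605.08539 — 2 statements merged into one kernel-verified Lean document; each statement's English description precedes it below -/
import Mathlib

section
/- Let x solve x' = Δ(u(t))·(A x + B(u(t))·u(t)) and ξ solve ξ' = Δ(v(t))·(A ξ + B(v(t))·v(t)) on [0,1], both with zero initial condition, where |u(t) − v(t)| ≤ L_u·τ for all t. Assume Δ, B are Lipschitz with constants L_Δ, L_B, and uniform bounds M_Δ = sup Δ, M_B = sup ‖B‖, M_u = sup(|u|,|v|) over the relevant ranges. Then for all t ∈ [0,1], ‖ξ(t) − x(t)‖ ≤ [(M_Δ(L_B M_u + M_B)L_u + L_Δ L_u M_B M_u·exp(M_Δ‖A‖))/(M_Δ‖A‖)]·(exp(M_Δ‖A‖·t) − 1)·τ. -/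
/-!
Both trajectories start at `0`, so Grönwall's inequality first bounds `x` by
`Mu MB / ‖A‖ · (exp (MΔ‖A‖ t) - 1)`, hence `A x + v B(v)` by `Mu MB exp (MΔ‖A‖)`.
Splitting the difference of the two vector fields as
`Δ(v) A(ξ - x) + (Δ(v) - Δ(u)) (A x + v B(v)) + Δ(u) (v B(v) - u B(u))`
shows `‖(ξ - x)'‖ ≤ MΔ‖A‖ ‖ξ - x‖ + ε` with `ε` proportional to `τ`,
and Grönwall's inequality applied to `ξ - x` gives the bound.
-/

open Set Real

variable {E : Type*} [NormedAddCommGroup E] [NormedSpace ℝ E]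

theorem norm_le_gronwall_of_eq_zero {f f' : ℝ → E} {a b K ε : ℝ} (hK : K ≠ 0)
    (hf : ∀ t ∈ Icc a b, HasDerivAt f (f' t) t) (ha : f a = 0)
    (bound : ∀ t ∈ Ico a b, ‖f' t‖ ≤ K * ‖f t‖ + ε) :
    ∀ t ∈ Icc a b, ‖f t‖ ≤ ε / K * (exp (K * (t - a)) - 1) := by
  intro t ht
  have h := norm_le_gronwallBound_of_norm_deriv_right_le
    (fun s hs => (hf s hs).continuousAt.continuousWithinAt)
    (fun s hs => (hf s (Ico_subset_Icc_self hs)).hasDerivWithinAt)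
    (by rw [ha, norm_zero]) bound t ht
  simpa [gronwallBound_of_K_ne_0 hK] using h

theorem norm_smul_le_mul_of_le {c M N : ℝ} {b : E} (hc : |c| ≤ M) (hb : ‖b‖ ≤ N) :
    ‖c • b‖ ≤ M * N := by
  rw [norm_smul, Real.norm_eq_abs]
  exact mul_le_mul hc hb (norm_nonneg _) ((abs_nonneg c).trans hc)

theorem norm_smul_sub_smul_le (s t : ℝ) (b c : E) :
    ‖t • c - s • b‖ ≤ |t| * ‖c - b‖ + |t - s| * ‖b‖ := by
  have : t • c - s • b = t • (c - b) + (t - s) • b := by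
    simp only [smul_sub, sub_smul]; abel
  rw [this, ← Real.norm_eq_abs, ← Real.norm_eq_abs, ← norm_smul, ← norm_smul]
  exact norm_add_le _ _

section SSM

variable (A : E →L[ℝ] E) (B : ℝ → E) (Δ : ℝ → ℝ)

def ssmField (w : ℝ) (y : E) : E := Δ w • (A y + w • B w)

theorem norm_ssmField_le {w MΔ Mw MB : ℝ} (y : E) (hΔ : |Δ w| ≤ MΔ) (hw : |w| ≤ Mw)
    (hB : ‖B w‖ ≤ MB) :
    ‖ssmField A B Δ w y‖ ≤ MΔ * ‖A‖ * ‖y‖ + MΔ * (Mw * MB) := by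
  calc ‖ssmField A B Δ w y‖ = |Δ w| * ‖A y + w • B w‖ := by
        rw [ssmField, norm_smul, Real.norm_eq_abs]
    _ ≤ MΔ * (‖A‖ * ‖y‖ + Mw * MB) :=
        mul_le_mul hΔ (norm_add_le_of_le (A.le_opNorm y) (norm_smul_le_mul_of_le hw hB))
          (norm_nonneg _) ((abs_nonneg _).trans hΔ)
    _ = MΔ * ‖A‖ * ‖y‖ + MΔ * (Mw * MB) := by ring

theorem ssmField_sub_ssmField (u v : ℝ) (x ξ : E) :
    ssmField A B Δ v ξ - ssmField A B Δ u x =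
      Δ v • A (ξ - x) + (Δ v - Δ u) • (A x + v • B v) + Δ u • (v • B v - u • B u) := by
  simp only [ssmField, map_sub, smul_sub, sub_smul, smul_add]
  abel

theorem norm_ssmField_sub_le {u v MΔ LΔ LB Mu MB δ R : ℝ} (x ξ : E)
    (hd : |u - v| ≤ δ) (hΔd : |Δ u - Δ v| ≤ LΔ * δ) (hBd : ‖B u - B v‖ ≤ LB * δ)
    (hΔu : |Δ u| ≤ MΔ) (hΔv : |Δ v| ≤ MΔ) (hv : |v| ≤ Mu) (hBu : ‖B u‖ ≤ MB)
    (hR : ‖A x + v • B v‖ ≤ R) :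
    ‖ssmField A B Δ v ξ - ssmField A B Δ u x‖ ≤
      MΔ * ‖A‖ * ‖ξ - x‖ + (MΔ * (LB * Mu + MB) * δ + LΔ * δ * R) := by
  have hMΔ : 0 ≤ MΔ := (abs_nonneg _).trans hΔu
  have hinput : ‖v • B v - u • B u‖ ≤ Mu * (LB * δ) + δ * MB := by
    refine (norm_smul_sub_smul_le u v (B u) (B v)).trans (add_le_add ?_ ?_)
    · rw [norm_sub_rev]
      exact mul_le_mul hv hBd (norm_nonneg _) ((abs_nonneg v).trans hv)
    · rw [abs_sub_comm]
      exact mul_le_mul hd hBu (norm_nonneg _) ((abs_nonneg _).trans hd)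
  rw [ssmField_sub_ssmField]
  refine norm_add₃_le.trans ?_
  simp only [norm_smul, Real.norm_eq_abs]
  have h₁ : |Δ v| * ‖A (ξ - x)‖ ≤ MΔ * (‖A‖ * ‖ξ - x‖) :=
    mul_le_mul hΔv (A.le_opNorm _) (norm_nonneg _) hMΔ
  have h₂ : |Δ v - Δ u| * ‖A x + v • B v‖ ≤ LΔ * δ * R := by
    rw [abs_sub_comm]
    exact mul_le_mul hΔd hR (norm_nonneg _) ((abs_nonneg _).trans hΔd)
  have h₃ : |Δ u| * ‖v • B v - u • B u‖ ≤ MΔ * (Mu * (LB * δ) + δ * MB) :=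
    mul_le_mul hΔu hinput (norm_nonneg _) hMΔ
  linarith

theorem norm_apply_le_of_hasDerivAt_ssmField {x : ℝ → E} {u : ℝ → ℝ} {a b MΔ Mu MB : ℝ}
    (hMΔ : 0 < MΔ) (hA : 0 < ‖A‖)
    (hx : ∀ t ∈ Icc a b, HasDerivAt x (ssmField A B Δ (u t) (x t)) t) (hxa : x a = 0)
    (hΔ : ∀ t ∈ Icc a b, |Δ (u t)| ≤ MΔ) (hu : ∀ t ∈ Icc a b, |u t| ≤ Mu)
    (hB : ∀ t ∈ Icc a b, ‖B (u t)‖ ≤ MB) :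
    ∀ t ∈ Icc a b, ‖A (x t)‖ ≤ Mu * MB * (exp (MΔ * ‖A‖ * (t - a)) - 1) := by
  intro t ht
  have hx_le := norm_le_gronwall_of_eq_zero (mul_pos hMΔ hA).ne' hx hxa
    (fun s hs => have hs' := Ico_subset_Icc_self hs
      norm_ssmField_le A B Δ (x s) (hΔ s hs') (hu s hs') (hB s hs')) t ht
  calc ‖A (x t)‖ ≤ ‖A‖ * ‖x t‖ := A.le_opNorm _
    _ ≤ ‖A‖ * (MΔ * (Mu * MB) / (MΔ * ‖A‖) * (exp (MΔ * ‖A‖ * (t - a)) - 1)) := by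
        gcongr
    _ = Mu * MB * (exp (MΔ * ‖A‖ * (t - a)) - 1) := by field_simp

end SSM

theorem continuous_perturbation_bound_general {n : ℕ}
    (A : EuclideanSpace ℝ (Fin n) →L[ℝ] EuclideanSpace ℝ (Fin n))
    (hA : 0 < ‖A‖)
    (u v : ℝ → ℝ)
    (B : ℝ → EuclideanSpace ℝ (Fin n)) (Δ : ℝ → ℝ)
    (LB LΔ Lu MB Mu MΔ τ : ℝ)
    (hLB : 0 ≤ LB) (hLΔ : 0 ≤ LΔ)
    (hMB : 0 ≤ MB) (hMu : 0 ≤ Mu) (hMΔ : 0 < MΔ)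
    (hBLip : ∀ s t : ℝ, ‖B s - B t‖ ≤ LB * |s - t|)
    (hΔLip : ∀ s t : ℝ, |Δ s - Δ t| ≤ LΔ * |s - t|)
    (hΔpos : ∀ w : ℝ, 0 < Δ w)
    (hclose : ∀ t ∈ Icc (0:ℝ) 1, |u t - v t| ≤ Lu * τ)
    (hub : ∀ t ∈ Icc (0:ℝ) 1, |u t| ≤ Mu) (hvb : ∀ t ∈ Icc (0:ℝ) 1, |v t| ≤ Mu)
    (hBu : ∀ t ∈ Icc (0:ℝ) 1, ‖B (u t)‖ ≤ MB) (hBv : ∀ t ∈ Icc (0:ℝ) 1, ‖B (v t)‖ ≤ MB)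
    (hΔu : ∀ t ∈ Icc (0:ℝ) 1, Δ (u t) ≤ MΔ) (hΔv : ∀ t ∈ Icc (0:ℝ) 1, Δ (v t) ≤ MΔ)
    (x ξ : ℝ → EuclideanSpace ℝ (Fin n))
    (hx : ∀ t ∈ Icc (0:ℝ) 1,
      HasDerivAt x (Δ (u t) • (A (x t) + (u t) • B (u t))) t)
    (hξ : ∀ t ∈ Icc (0:ℝ) 1,
      HasDerivAt ξ (Δ (v t) • (A (ξ t) + (v t) • B (v t))) t)
    (hx0 : x 0 = 0) (hξ0 : ξ 0 = 0) :
    ∀ t ∈ Icc (0:ℝ) 1,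
      ‖ξ t - x t‖
        ≤ (MΔ * (LB * Mu + MB) * Lu
            + LΔ * Lu * MB * Mu * Real.exp (MΔ * ‖A‖)) / (MΔ * ‖A‖)
          * (Real.exp (MΔ * ‖A‖ * t) - 1) * τ := by
  set K := MΔ * ‖A‖
  have hK : K ≠ 0 := (mul_pos hMΔ hA).ne'
  have habsΔ : ∀ w, |Δ w| = Δ w := fun w => abs_of_pos (hΔpos w)
  have hforcing : ∀ t ∈ Icc (0:ℝ) 1, ‖A (x t) + v t • B (v t)‖ ≤ Mu * MB * exp K := by
    intro t ht
    have hAx := norm_apply_le_of_hasDerivAt_ssmField A B Δ hMΔ hA hx hx0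
      (fun s hs => (habsΔ _).trans_le (hΔu s hs)) hub hBu t ht
    have hexp : exp (K * t) ≤ exp K :=
      exp_le_exp.2 (mul_le_of_le_one_right (mul_pos hMΔ hA).le ht.2)
    rw [sub_zero] at hAx
    linarith [norm_add_le_of_le hAx (norm_smul_le_mul_of_le (hvb t ht) (hBv t ht)),
      mul_le_mul_of_nonneg_left hexp (mul_nonneg hMu hMB)]
  have hgap := norm_le_gronwall_of_eq_zero (f := fun t => ξ t - x t) hK
    (fun t ht => (hξ t ht).sub (hx t ht)) (by simp [hx0, hξ0]) fun t ht =>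
      have ht' := Ico_subset_Icc_self ht
      norm_ssmField_sub_le A B Δ (x t) (ξ t) (hclose t ht')
        ((hΔLip _ _).trans (mul_le_mul_of_nonneg_left (hclose t ht') hLΔ))
        ((hBLip _ _).trans (mul_le_mul_of_nonneg_left (hclose t ht') hLB))
        ((habsΔ _).trans_le (hΔu t ht')) ((habsΔ _).trans_le (hΔv t ht'))
        (hvb t ht') (hBu t ht') (hforcing t ht')
  intro t ht
  calc ‖ξ t - x t‖ ≤ _ := hgap t ht
    _ = _ := by simp only [sub_zero]; ring

/-- Continuous perturbation bound (Lemma 1, continuous step): two trajectories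
of the SSM dynamics driven by inputs `u` and `v` with `|u − v| ≤ Lu·τ` differ by
at most `K·(exp(MΔ‖A‖·t) − 1)·τ`, where
`K = (MΔ(L_B·Mu + MB)·Lu + LΔ·Lu·MB·Mu·exp(MΔ‖A‖))/(MΔ‖A‖)`. -/
theorem continuous_perturbation_bound {n : ℕ}
    (A : EuclideanSpace ℝ (Fin n) →L[ℝ] EuclideanSpace ℝ (Fin n))
    (hA : 0 < ‖A‖)
    (u v : ℝ → ℝ) (hu : Continuous u) (hv : Continuous v)
    (B : ℝ → EuclideanSpace ℝ (Fin n)) (Δ : ℝ → ℝ)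
    (LB LΔ Lu MB Mu MΔ τ : ℝ)
    (hLB : 0 ≤ LB) (hLΔ : 0 ≤ LΔ) (hLu : 0 ≤ Lu)
    (hMB : 0 ≤ MB) (hMu : 0 ≤ Mu) (hMΔ : 0 < MΔ) (hτ : 0 < τ)
    (hBLip : ∀ s t : ℝ, ‖B s - B t‖ ≤ LB * |s - t|)
    (hΔLip : ∀ s t : ℝ, |Δ s - Δ t| ≤ LΔ * |s - t|)
    (hΔpos : ∀ w : ℝ, 0 < Δ w)
    (hclose : ∀ t ∈ Icc (0:ℝ) 1, |u t - v t| ≤ Lu * τ)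
    (hub : ∀ t ∈ Icc (0:ℝ) 1, |u t| ≤ Mu) (hvb : ∀ t ∈ Icc (0:ℝ) 1, |v t| ≤ Mu)
    (hBu : ∀ t ∈ Icc (0:ℝ) 1, ‖B (u t)‖ ≤ MB) (hBv : ∀ t ∈ Icc (0:ℝ) 1, ‖B (v t)‖ ≤ MB)
    (hΔu : ∀ t ∈ Icc (0:ℝ) 1, Δ (u t) ≤ MΔ) (hΔv : ∀ t ∈ Icc (0:ℝ) 1, Δ (v t) ≤ MΔ)
    (x ξ : ℝ → EuclideanSpace ℝ (Fin n))
    (hx : ∀ t ∈ Icc (0:ℝ) 1,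
      HasDerivAt x (Δ (u t) • (A (x t) + (u t) • B (u t))) t)
    (hξ : ∀ t ∈ Icc (0:ℝ) 1,
      HasDerivAt ξ (Δ (v t) • (A (ξ t) + (v t) • B (v t))) t)
    (hx0 : x 0 = 0) (hξ0 : ξ 0 = 0) :
    ∀ t ∈ Icc (0:ℝ) 1,
      ‖ξ t - x t‖
        ≤ (MΔ * (LB * Mu + MB) * Lu
            + LΔ * Lu * MB * Mu * Real.exp (MΔ * ‖A‖)) / (MΔ * ‖A‖)
          * (Real.exp (MΔ * ‖A‖ * t) - 1) * τ :=
  continuous_perturbation_bound_general A hA u v B Δ LB LΔ Lu MB Mu MΔ τ hLB hLΔ hMB hMu hMΔ hBLip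
    hΔLip hΔpos hclose hub hvb hBu hBv hΔu hΔv x ξ hx hξ hx0 hξ0
end

section
/- Let y_k^τ be the ZOH-discretized output of an S4 system on samples u(τk) of an L_u-Lipschitz input u : [0,1] → ℝ, and let y(t) be the continuous output of the same system on u. Then for all 1 ≤ k ≤ ⌊1/τ⌋, |y_k^τ − y(τk)| ≤ (‖C‖·‖B‖·L_u·(exp(Δ‖A‖) − 1)/‖A‖)·τ, with no higher-order remainder. -/
/-!
By Duhamel's formula the exact state satisfies
`x(b) = e^{(b-a)ΔA} x(a) + ∫_a^b e^{(b-s)ΔA} Δ u(s) B ds`, while the ZOH update is the same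
formula with `u(s)` frozen at `u(a)`: `A⁻¹(e^{τΔA} - 1)B = ∫_a^b e^{(b-s)ΔA} Δ B ds`.
So one step adds the local error `∫_a^b e^{(b-s)ΔA} Δ (u(a) - u(s)) B ds`, of norm at most
`L_u τ ‖B‖ (e^{τΔ‖A‖} - 1)/‖A‖`, and amplifies the previous error by at most
`e^{τΔ‖A‖}`. The geometric sum of the local errors telescopes to
`L_u τ ‖B‖ (e^{kτΔ‖A‖} - 1)/‖A‖`, and `kτ ≤ 1`.
-/

open NormedSpace Set intervalIntegral MeasureTheory

theorem integral_exp_sub_mul {c : ℝ} (hc : c ≠ 0) (a b : ℝ) :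
    ∫ s in a..b, Real.exp ((b - s) * c) = (Real.exp ((b - a) * c) - 1) / c := by
  rw [intervalIntegral.integral_comp_sub_left (fun s => Real.exp (s * c)) b,
    intervalIntegral.integral_comp_mul_right Real.exp hc, integral_exp]
  simp only [sub_self, zero_mul, Real.exp_zero, smul_eq_mul]
  field_simp

theorem le_mul_pow_sub_one_of_le_mul_add {e : ℕ → ℝ} {q K : ℝ} {N : ℕ} (hq : 0 ≤ q)
    (h0 : e 0 ≤ 0) (hstep : ∀ m < N, e (m + 1) ≤ q * e m + K * (q - 1)) :
    ∀ m ≤ N, e m ≤ K * (q ^ m - 1) := by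
  intro m hm
  induction m with
  | zero => simpa using h0
  | succ m ih =>
    calc e (m + 1) ≤ q * e m + K * (q - 1) := hstep m hm
      _ ≤ q * (K * (q ^ m - 1)) + K * (q - 1) := by gcongr; exact ih (by omega)
      _ = K * (q ^ (m + 1) - 1) := by ring

section LinearODE

variable {H : Type*} [NormedAddCommGroup H] [NormedSpace ℝ H] (M : H →L[ℝ] H)

theorem ContinuousLinearMap.norm_exp_le_exp_norm : ‖exp M‖ ≤ Real.exp ‖M‖ := by
  rw [exp_eq_tsum ℝ, Real.exp_eq_exp_ℝ, exp_eq_tsum ℝ]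
  have hM := norm_expSeries_summable' (𝕂 := ℝ) M
  refine (norm_tsum_le_tsum_norm hM).trans <|
    Summable.tsum_le_tsum (fun n => ?_) hM (expSeries_summable' (𝕂 := ℝ) ‖M‖)
  rw [norm_smul, smul_eq_mul]
  gcongr
  · simp
  rcases Nat.eq_zero_or_pos n with rfl | hn
  · simp only [pow_zero]
    exact ContinuousLinearMap.norm_id_le
  · exact norm_pow_le' M hn

theorem ContinuousLinearMap.norm_exp_smul_le {t : ℝ} (ht : 0 ≤ t) :
    ‖exp (t • M)‖ ≤ Real.exp (t * ‖M‖) := by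
  simpa [norm_smul, abs_of_nonneg ht] using (t • M).norm_exp_le_exp_norm

theorem norm_integral_exp_sub_smul_apply_le (hM : ‖M‖ ≠ 0) {g : ℝ → H} {a b K : ℝ}
    (hab : a ≤ b) (hg : ∀ s ∈ Icc a b, ‖g s‖ ≤ K) :
    ‖∫ s in a..b, exp ((b - s) • M) (g s)‖
      ≤ K * (Real.exp ((b - a) * ‖M‖) - 1) / ‖M‖ := by
  have hbound : ∀ᵐ s, s ∈ Ioc a b →
      ‖exp ((b - s) • M) (g s)‖ ≤ Real.exp ((b - s) * ‖M‖) * K :=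
    ae_of_all _ fun s hs => ContinuousLinearMap.le_of_opNorm_le_of_le _
      (M.norm_exp_smul_le (sub_nonneg.2 hs.2)) (hg s (Ioc_subset_Icc_self hs))
  calc ‖∫ s in a..b, exp ((b - s) • M) (g s)‖
      ≤ ∫ s in a..b, Real.exp ((b - s) * ‖M‖) * K :=
        norm_integral_le_of_norm_le hab hbound (Continuous.intervalIntegrable (by fun_prop) a b)
    _ = K * (Real.exp ((b - a) * ‖M‖) - 1) / ‖M‖ := by
        rw [intervalIntegral.integral_mul_const, integral_exp_sub_mul hM]
        ring

variable [CompleteSpace H]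

theorem hasDerivAt_exp_sub_smul (b s : ℝ) :
    HasDerivAt (fun r : ℝ => exp ((b - r) • M)) (-(M * exp ((b - s) • M))) s := by
  simpa [Function.comp_def] using
    (hasDerivAt_exp_smul_const' M (b - s)).scomp s ((hasDerivAt_id s).const_sub b)

theorem continuous_exp_sub_smul (b : ℝ) : Continuous fun s : ℝ => exp ((b - s) • M) :=
  continuous_iff_continuousAt.2 fun s => (hasDerivAt_exp_sub_smul M b s).continuousAt

theorem intervalIntegrable_exp_sub_smul_apply {f : ℝ → H} {a b : ℝ}
    (hf : ContinuousOn f (uIcc a b)) :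
    IntervalIntegrable (fun s => exp ((b - s) • M) (f s)) volume a b :=
  ((continuous_exp_sub_smul M b).continuousOn.clm_apply hf).intervalIntegrable

theorem eq_exp_smul_add_integral_of_hasDerivAt {x f : ℝ → H} {a b : ℝ} (hab : a ≤ b)
    (hx : ∀ t ∈ Icc a b, HasDerivAt x (M (x t) + f t) t) (hf : ContinuousOn f (Icc a b)) :
    x b = exp ((b - a) • M) (x a) + ∫ s in a..b, exp ((b - s) • M) (f s) := by
  have hderiv : ∀ s ∈ uIcc a b, HasDerivAt (fun r => exp ((b - r) • M) (x r))
      (exp ((b - s) • M) (f s)) s := by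
    intro s hs
    rw [uIcc_of_le hab] at hs
    convert (hasDerivAt_exp_sub_smul M b s).clm_apply (hx s hs) using 1
    rw [(((Commute.refl M).smul_right (b - s)).exp_right).eq]
    simp only [neg_apply, mul_apply_eq_comp, map_add]
    abel
  rw [integral_eq_sub_of_hasDerivAt hderiv
    (intervalIntegrable_exp_sub_smul_apply M (by rwa [uIcc_of_le hab]))]
  simp

theorem integral_exp_sub_smul_apply {N : H →L[ℝ] H} (hNM : N * M = 1) (a b : ℝ) (v : H) :
    ∫ s in a..b, exp ((b - s) • M) v = N ((exp ((b - a) • M) - 1) v) := by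
  have hderiv : ∀ s ∈ uIcc a b, HasDerivAt (fun r => exp ((b - r) • M) v)
      (-M (exp ((b - s) • M) v)) s := fun s _ => by
    simpa using (hasDerivAt_exp_sub_smul M b s).clm_apply (hasDerivAt_const s v)
  have hcont : Continuous fun s => exp ((b - s) • M) v :=
    (continuous_exp_sub_smul M b).clm_apply continuous_const
  have hM : M (∫ s in a..b, exp ((b - s) • M) v) = (exp ((b - a) • M) - 1) v := by
    rw [← M.intervalIntegral_comp_comm (hcont.intervalIntegrable a b),
      ← neg_neg (∫ s in a..b, _), ← intervalIntegral.integral_neg,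
      integral_eq_sub_of_hasDerivAt hderiv ((M.continuous.comp hcont).neg.intervalIntegrable a b)]
    simp
  rw [← hM, ← mul_apply_eq_comp, hNM, one_apply_eq_self]

theorem norm_zoh_step_sub_le {N : H →L[ℝ] H} (hNM : N * M = 1) (hM : ‖M‖ ≠ 0)
    {x f : ℝ → H} {a h K : ℝ} (hh : 0 ≤ h)
    (hx : ∀ t ∈ Icc a (a + h), HasDerivAt x (M (x t) + f t) t)
    (hf : ContinuousOn f (Icc a (a + h))) (hfK : ∀ s ∈ Icc a (a + h), ‖f a - f s‖ ≤ K)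
    (ξ : H) :
    ‖exp (h • M) ξ + N ((exp (h • M) - 1) (f a)) - x (a + h)‖
      ≤ Real.exp (h * ‖M‖) * ‖ξ - x a‖ + K * (Real.exp (h * ‖M‖) - 1) / ‖M‖ := by
  have hab : a ≤ a + h := le_add_of_nonneg_right hh
  have hint_const := ((continuous_exp_sub_smul M (a + h)).clm_apply
    (continuous_const (y := f a))).intervalIntegrable (μ := volume) a (a + h)
  have hint := intervalIntegrable_exp_sub_smul_apply M (a := a) (by rwa [uIcc_of_le hab])
  have herr : exp (h • M) ξ + N ((exp (h • M) - 1) (f a)) - x (a + h)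
      = exp (h • M) (ξ - x a) + ∫ s in a..a + h, exp ((a + h - s) • M) (f a - f s) := by
    have hzoh := integral_exp_sub_smul_apply M hNM a (a + h) (f a)
    rw [add_sub_cancel_left] at hzoh
    rw [eq_exp_smul_add_integral_of_hasDerivAt M hab hx hf, add_sub_cancel_left, ← hzoh]
    simp only [map_sub]
    rw [intervalIntegral.integral_sub hint_const hint]
    abel
  have hlocal := norm_integral_exp_sub_smul_apply_le M hM hab hfK
  rw [add_sub_cancel_left] at hlocal
  rw [herr]
  exact (norm_add_le _ _).trans (add_le_add
    ((exp (h • M)).le_of_opNorm_le_of_le (M.norm_exp_smul_le hh) le_rfl) hlocal)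

end LinearODE

theorem norm_s4_zoh_step_sub_le {H : Type*} [NormedAddCommGroup H] [NormedSpace ℝ H]
    [CompleteSpace H] {A Ainv : H →L[ℝ] H} (hAinv : Ainv * A = 1) (hA : 0 < ‖A‖) {Δ : ℝ}
    (hΔ : 0 < Δ) (B : H) {u : ℝ → ℝ} {x : ℝ → H} {Lu a τ : ℝ} (hLu : 0 ≤ Lu)
    (hτ : 0 ≤ τ)
    (huLip : ∀ s ∈ Icc a (a + τ), ∀ t ∈ Icc a (a + τ), |u s - u t| ≤ Lu * |s - t|)
    (hx : ∀ t ∈ Icc a (a + τ), HasDerivAt x (Δ • (A (x t) + u t • B)) t) (ξ : H) :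
    ‖exp ((τ * Δ) • A) ξ + u a • Ainv ((exp ((τ * Δ) • A) - 1) B) - x (a + τ)‖
      ≤ Real.exp (τ * (Δ * ‖A‖)) * ‖ξ - x a‖
        + Lu * τ * ‖B‖ / ‖A‖ * (Real.exp (τ * (Δ * ‖A‖)) - 1) := by
  have hu : ContinuousOn u (Icc a (a + τ)) :=
    (LipschitzOnWith.of_dist_le_mul (K := ⟨Lu, hLu⟩) huLip).continuousOn
  have ha : a ∈ Icc a (a + τ) := left_mem_Icc.2 (le_add_of_nonneg_right hτ)
  have huL : ∀ s ∈ Icc a (a + τ), |u a - u s| ≤ Lu * τ := fun s hs => by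
    refine (huLip a ha s hs).trans ?_
    gcongr
    rw [abs_le]
    constructor <;> linarith [hs.1, hs.2]
  have hM : ‖Δ • A‖ = Δ * ‖A‖ := by rw [norm_smul, Real.norm_of_nonneg hΔ.le]
  have hNM : (Δ⁻¹ • Ainv) * (Δ • A) = 1 := by
    rw [smul_mul_smul_comm, hAinv, inv_mul_cancel₀ hΔ.ne', one_smul]
  have hstep := norm_zoh_step_sub_le (Δ • A) hNM (hM ▸ (mul_pos hΔ hA).ne')
    (f := fun t => (Δ * u t) • B) (K := Δ * (Lu * τ) * ‖B‖) hτ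
    (fun t ht => by simpa [smul_add, smul_smul] using hx t ht)
    ((continuousOn_const.mul hu).smul continuousOn_const)
    (fun s hs => by
      rw [← sub_smul, ← mul_sub, norm_smul, norm_mul, Real.norm_of_nonneg hΔ.le,
        Real.norm_eq_abs]
      gcongr
      exact huL s hs) ξ
  have hzoh : (Δ⁻¹ • Ainv) ((exp (τ • Δ • A) - 1) ((Δ * u a) • B))
      = u a • Ainv ((exp ((τ * Δ) • A) - 1) B) := by
    simp only [smul_smul, map_smul, smul_apply]
    field_simp
  rw [hzoh, hM, smul_smul] at hstep
  convert hstep using 2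
  field_simp

theorem s4_zoh_discretization_error_general {n : ℕ}
    (A Ainv : EuclideanSpace ℝ (Fin n) →L[ℝ] EuclideanSpace ℝ (Fin n))
    (hAinv : Ainv * A = 1) (hA : 0 < ‖A‖)
    (B C : EuclideanSpace ℝ (Fin n)) (D Δ : ℝ) (hΔ : 0 < Δ)
    (u : ℝ → ℝ) (Lu : ℝ) (hLu : 0 ≤ Lu)
    (huLip : ∀ s ∈ Icc (0:ℝ) 1, ∀ t ∈ Icc (0:ℝ) 1, |u s - u t| ≤ Lu * |s - t|)
    (τ : ℝ) (hτ0 : 0 < τ)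
    (x : ℝ → EuclideanSpace ℝ (Fin n))
    (hx : ∀ t ∈ Icc (0:ℝ) 1, HasDerivAt x (Δ • (A (x t) + (u t) • B)) t)
    (hx0 : x 0 = 0)
    (y : ℝ → ℝ) (hy : ∀ t, y t = (inner ℝ C (x t) : ℝ) + D * u t)
    (xd : ℕ → EuclideanSpace ℝ (Fin n)) (hxd0 : xd 0 = 0)
    (hxd : ∀ k : ℕ, xd (k + 1) =
      exp ((τ * Δ) • A) (xd k)
        + (u (τ * k)) • (Ainv ((exp ((τ * Δ) • A) - 1) B)))
    (yd : ℕ → ℝ) (hyd : ∀ k : ℕ, yd k = (inner ℝ C (xd k) : ℝ) + D * u (τ * k)) :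
    ∀ k : ℕ, 1 ≤ k → k ≤ ⌊1 / τ⌋₊ →
      |yd k - y (τ * k)|
        ≤ (‖C‖ * ‖B‖ * Lu * (Real.exp (Δ * ‖A‖) - 1) / ‖A‖) * τ := by
  intro k _ hk
  have hτN : ∀ m ≤ ⌊1 / τ⌋₊, τ * m ≤ 1 := fun m hm =>
    (le_div_iff₀' hτ0).1 ((Nat.le_floor_iff (by positivity)).1 hm)
  have hstep : ∀ m < ⌊1 / τ⌋₊, ‖xd (m + 1) - x (τ * ↑(m + 1))‖
      ≤ Real.exp (τ * (Δ * ‖A‖)) * ‖xd m - x (τ * m)‖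
        + Lu * τ * ‖B‖ / ‖A‖ * (Real.exp (τ * (Δ * ‖A‖)) - 1) := fun m hm => by
    have hsub : Icc (τ * m) (τ * m + τ) ⊆ Icc 0 1 := by
      refine Icc_subset_Icc (by positivity) ?_
      simpa [mul_add_one] using hτN (m + 1) hm
    rw [hxd, Nat.cast_succ, mul_add_one]
    exact norm_s4_zoh_step_sub_le hAinv hA hΔ B hLu hτ0.le
      (fun s hs t ht => huLip s (hsub hs) t (hsub ht)) (fun t ht => hx t (hsub ht)) _
  have herr := le_mul_pow_sub_one_of_le_mul_add (e := fun m => ‖xd m - x (τ * m)‖)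
    (Real.exp_pos _).le (by simp [hxd0, hx0]) hstep k hk
  rw [hyd, hy, add_sub_add_right_eq_sub, ← inner_sub_right]
  calc |inner ℝ C (xd k - x (τ * k))|
      ≤ ‖C‖ * ‖xd k - x (τ * k)‖ := abs_real_inner_le_norm _ _
    _ ≤ ‖C‖ * (Lu * τ * ‖B‖ / ‖A‖ * (Real.exp (τ * (Δ * ‖A‖)) ^ k - 1)) := by
      gcongr
    _ ≤ ‖C‖ * (Lu * τ * ‖B‖ / ‖A‖ * (Real.exp (Δ * ‖A‖) - 1)) := by
      have hpow : Real.exp (τ * (Δ * ‖A‖)) ^ k ≤ Real.exp (Δ * ‖A‖) := by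
        rw [← Real.exp_nat_mul]
        exact Real.exp_le_exp.2 (by nlinarith [hτN k hk, mul_pos hΔ hA])
      gcongr
    _ = (‖C‖ * ‖B‖ * Lu * (Real.exp (Δ * ‖A‖) - 1) / ‖A‖) * τ := by ring

/-- Corollary 1 (S4, ZOH): for the S4 system `x' = Δ(Ax + uB)`,
`y = ⟪C, x⟫ + Du`, with `u` `L_u`-Lipschitz on `[0,1]` and the ZOH
discretization at step `τ`, the discrete output satisfies
`|y_k^τ − y(τk)| ≤ ‖C‖‖B‖L_u (exp(Δ‖A‖) − 1)/‖A‖ · τ` for `1 ≤ k ≤ ⌊1/τ⌋`,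
with no higher-order remainder. -/
theorem s4_zoh_discretization_error {n : ℕ}
    (A Ainv : EuclideanSpace ℝ (Fin n) →L[ℝ] EuclideanSpace ℝ (Fin n))
    (hAinv : Ainv * A = 1) (hAinv' : A * Ainv = 1) (hA : 0 < ‖A‖)
    (B C : EuclideanSpace ℝ (Fin n)) (D Δ : ℝ) (hΔ : 0 < Δ)
    (u : ℝ → ℝ) (Lu : ℝ) (hLu : 0 ≤ Lu)
    (huLip : ∀ s ∈ Icc (0:ℝ) 1, ∀ t ∈ Icc (0:ℝ) 1, |u s - u t| ≤ Lu * |s - t|)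
    (τ : ℝ) (hτ0 : 0 < τ) (hτ1 : τ < 1)
    (x : ℝ → EuclideanSpace ℝ (Fin n))
    (hx : ∀ t ∈ Icc (0:ℝ) 1, HasDerivAt x (Δ • (A (x t) + (u t) • B)) t)
    (hx0 : x 0 = 0)
    (y : ℝ → ℝ) (hy : ∀ t, y t = (inner ℝ C (x t) : ℝ) + D * u t)
    (xd : ℕ → EuclideanSpace ℝ (Fin n)) (hxd0 : xd 0 = 0)
    (hxd : ∀ k : ℕ, xd (k + 1) =
      exp ((τ * Δ) • A) (xd k)
        + (u (τ * k)) • (Ainv ((exp ((τ * Δ) • A) - 1) B)))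
    (yd : ℕ → ℝ) (hyd : ∀ k : ℕ, yd k = (inner ℝ C (xd k) : ℝ) + D * u (τ * k)) :
    ∀ k : ℕ, 1 ≤ k → k ≤ ⌊1 / τ⌋₊ →
      |yd k - y (τ * k)|
        ≤ (‖C‖ * ‖B‖ * Lu * (Real.exp (Δ * ‖A‖) - 1) / ‖A‖) * τ :=
  s4_zoh_discretization_error_general A Ainv hAinv hA B C D Δ hΔ u Lu hLu huLip τ hτ0 x hx hx0 y hy
    xd hxd0 hxd yd hyd
end
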